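/- Let X be a Banach space in which ℓ₁ is finitely representable. Then the dual space (C([0,1]))* of the Banach space C([0,1]) of continuous real-valued functions on [0,1] with the supremum norm is finitely representable in X; moreover C([0,1]) is separable and (C([0,1]))* is nonseparable. -/

import Mathlib

/-- `X` is finitely representable in `Y`: for every `ε > 0` and every finite-dimensional
subspace `F ⊆ X` there is a linear map `T : F → Y` with
`(1 − ε)‖x‖ ≤ ‖T x‖ ≤ (1 + ε)‖x‖` for all `x ∈ F`. -/
def FinitelyRepresentable (X Y : Type*) [NormedAddCommGroup X] [NormedSpace ℝ X]
    [NormedAddCommGroup Y] [NormedSpace ℝ Y] : Prop :=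
  ∀ ε : ℝ, 0 < ε → ∀ F : Subspace ℝ X, FiniteDimensional ℝ F →
    ∃ T : F →ₗ[ℝ] Y, ∀ x : F, (1 - ε) * ‖x‖ ≤ ‖T x‖ ∧ ‖T x‖ ≤ (1 + ε) * ‖x‖

/-- A Banach space `X` is superreflexive if every Banach space finitely representable
in `X` is reflexive (i.e. the canonical embedding into the bidual is surjective). -/
def IsSuperreflexive (X : Type u) [NormedAddCommGroup X] [NormedSpace ℝ X] : Prop :=
  ∀ (Y : Type u) [NormedAddCommGroup Y] [NormedSpace ℝ Y] [CompleteSpace Y],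
    FinitelyRepresentable Y X → Function.Surjective (NormedSpace.inclusionInDoubleDual ℝ Y)

/-! The Bernstein coefficient maps `φ ↦ (φ (bernstein n k))ₖ` send `(C[0,1])*` into `ℓ₁` with
norm at most one, because the Bernstein polynomials form a partition of unity. Conversely,
`|φ (Bₙ f)| ≤ ‖(φ (bernstein n k))ₖ‖₁` for `‖f‖ ≤ 1`, and the Bernstein approximations `Bₙ f`
converge uniformly to `f`, so these `ℓ₁`-norms tend to `‖φ‖`. As functions of `φ` they are
`1`-Lipschitz, hence equicontinuous, so the convergence is uniform on the unit sphere of any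
finite-dimensional subspace: `(C[0,1])*` is finitely representable in `ℓ₁`, hence in `X` by
transitivity. The Dirac functionals `δₜ`, `t ∈ [0,1]`, are pairwise at distance at least one (Urysohn), so
the dual is not separable. -/

open Filter Topology TopologicalSpace
open scoped unitInterval

theorem FinitelyRepresentable.trans {X Y Z : Type*} [NormedAddCommGroup X] [NormedSpace ℝ X]
    [NormedAddCommGroup Y] [NormedSpace ℝ Y] [NormedAddCommGroup Z] [NormedSpace ℝ Z]
    (hXY : FinitelyRepresentable X Y) (hYZ : FinitelyRepresentable Y Z) :
    FinitelyRepresentable X Z := by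
  intro ε hε F hF
  set δ := min ε 1 / 3 with hδ
  have hδ₀ : 0 < δ := by positivity
  have hδ₁ : δ ≤ 1 / 3 := by have := min_le_right ε 1; linarith
  have hδε : 3 * δ ≤ ε := by have := min_le_left ε 1; linarith
  obtain ⟨S, hS⟩ := hXY δ hδ₀ F hF
  have : FiniteDimensional ℝ F := hF
  obtain ⟨U, hU⟩ := hYZ δ hδ₀ (LinearMap.range S) inferInstance
  refine ⟨U ∘ₗ S.rangeRestrict, fun x => ?_⟩
  obtain ⟨hS₁, hS₂⟩ := hS x
  obtain ⟨hU₁, hU₂⟩ := hU (S.rangeRestrict x)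
  have hx := norm_nonneg x
  constructor
  · calc (1 - ε) * ‖x‖ ≤ (1 - δ) * ((1 - δ) * ‖x‖) := by nlinarith
      _ ≤ (1 - δ) * ‖S x‖ := by gcongr; linarith
      _ ≤ _ := hU₁
  · calc _ ≤ (1 + δ) * ‖S x‖ := hU₂
      _ ≤ (1 + δ) * ((1 + δ) * ‖x‖) := by gcongr
      _ ≤ (1 + ε) * ‖x‖ := by nlinarith

theorem eventually_forall_le_norm_of_tendsto_norm {ι E G : Type*} [NormedAddCommGroup E]
    [NormedSpace ℝ E] [FiniteDimensional ℝ E] [NormedAddCommGroup G] [NormedSpace ℝ G]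
    {l : Filter ι} (T : ι → E →ₗ[ℝ] G) (hT : ∀ i x, ‖T i x‖ ≤ ‖x‖)
    (hlim : ∀ x, Tendsto (fun i => ‖T i x‖) l (𝓝 ‖x‖)) {δ : ℝ} (hδ : 0 < δ) :
    ∀ᶠ i in l, ∀ x, (1 - δ) * ‖x‖ ≤ ‖T i x‖ := by
  let S := Metric.sphere (0 : E) 1
  have : CompactSpace S := isCompact_iff_compactSpace.mp (isCompact_sphere 0 1)
  have hlip : ∀ i, LipschitzWith 1 fun x : S => ‖T i x‖ := fun i =>
    have hTi : LipschitzWith 1 (T i) := AddMonoidHomClass.lipschitz_of_bound_nnnorm (T i) 1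
      fun x => by simpa [← NNReal.coe_le_coe] using hT i x
    ((lipschitzWith_one_norm.comp hTi).comp (LipschitzWith.subtype_val S)).weaken (by simp)
  have hunif : TendstoUniformly (fun i (x : S) => ‖T i x‖) (fun x => ‖(x : E)‖) l :=
    UniformFun.tendsto_iff_tendstoUniformly.mp <|
      ((LipschitzWith.uniformEquicontinuous _ 1 hlip).equicontinuous.tendsto_uniformFun_iff_pi
        l _).mpr (tendsto_pi_nhds.mpr fun x => hlim x)
  filter_upwards [Metric.tendstoUniformly_iff.mp hunif δ hδ] with i hi x
  rcases eq_or_ne x 0 with rfl | hx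
  · simp
  have hxpos : 0 < ‖x‖ := norm_pos_iff.mpr hx
  have hu : ‖x‖⁻¹ • x ∈ S := by simp [S, norm_smul, hx]
  have hTu : ‖T i (‖x‖⁻¹ • x)‖ = ‖x‖⁻¹ * ‖T i x‖ := by
    rw [map_smul, norm_smul, norm_inv, norm_norm]
  have h1 := hi ⟨_, hu⟩
  simp only [mem_sphere_zero_iff_norm.mp hu, hTu, Real.dist_eq] at h1
  rw [mul_comm, ← le_inv_mul_iff₀ hxpos]
  linarith [abs_lt.mp h1]

theorem finitelyRepresentable_of_tendsto_norm {ι E G : Type*} [NormedAddCommGroup E]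
    [NormedSpace ℝ E] [NormedAddCommGroup G] [NormedSpace ℝ G] {l : Filter ι} [l.NeBot]
    (T : ι → E →ₗ[ℝ] G) (hT : ∀ i x, ‖T i x‖ ≤ ‖x‖)
    (hlim : ∀ x, Tendsto (fun i => ‖T i x‖) l (𝓝 ‖x‖)) :
    FinitelyRepresentable E G := by
  intro ε hε F hF
  have : FiniteDimensional ℝ F := hF
  obtain ⟨i, hi⟩ := (eventually_forall_le_norm_of_tendsto_norm (l := l)
    (fun i => T i ∘ₗ F.subtype) (fun i (x : F) => hT i x) (fun x : F => hlim x) hε).exists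
  exact ⟨T i ∘ₗ F.subtype, fun x =>
    ⟨hi x, (hT i x).trans (le_mul_of_one_le_left (norm_nonneg _) (by linarith))⟩⟩

theorem sum_abs_apply_le_opNorm {X ι : Type*} [TopologicalSpace X] [CompactSpace X] [Fintype ι]
    (p : ι → C(X, ℝ)) (hp₀ : ∀ i x, 0 ≤ p i x) (hp₁ : ∀ x, ∑ i, p i x ≤ 1)
    (φ : StrongDual ℝ C(X, ℝ)) :
    ∑ i, |φ (p i)| ≤ ‖φ‖ := by
  set g : C(X, ℝ) := ∑ i, (SignType.sign (φ (p i)) : ℝ) • p i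
  have hg : ‖g‖ ≤ 1 := by
    refine (ContinuousMap.norm_le _ zero_le_one).mpr fun x => ?_
    calc ‖g x‖ ≤ ∑ i, ‖(SignType.sign (φ (p i)) : ℝ) * p i x‖ := by
          simpa [g] using norm_sum_le Finset.univ fun i => (SignType.sign (φ (p i)) : ℝ) * p i x
      _ ≤ ∑ i, p i x := Finset.sum_le_sum fun i _ => by
          rw [norm_mul, Real.norm_of_nonneg (hp₀ i x)]
          refine mul_le_of_le_one_left (hp₀ i x) ?_
          cases SignType.sign (φ (p i)) <;> simp
      _ ≤ 1 := hp₁ x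
  calc ∑ i, |φ (p i)| = φ g := by simp [g, map_sum]
    _ ≤ ‖φ‖ * ‖g‖ := (le_abs_self _).trans (φ.le_opNorm g)
    _ ≤ ‖φ‖ := mul_le_of_le_one_right (norm_nonneg φ) hg

theorem bernstein_eq_zero_of_lt {n k : ℕ} (h : n < k) : bernstein n k = 0 := by
  ext x
  simp [bernstein_apply, Nat.choose_eq_zero_of_lt h]

noncomputable def bernsteinCoeffs (n : ℕ) :
    StrongDual ℝ C(I, ℝ) →ₗ[ℝ] lp (fun _ : ℕ => ℝ) 1 where
  toFun φ := ⟨fun k => φ (bernstein n k), Memℓp.of_exponent_ge (memℓp_zero <|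
    (Set.finite_Iic n).subset fun k hk =>
      Set.mem_Iic.mpr <| not_lt.mp fun h => hk (by simp [bernstein_eq_zero_of_lt h])) zero_le_one⟩
  map_add' _ _ := rfl
  map_smul' _ _ := rfl

theorem norm_bernsteinCoeffs (n : ℕ) (φ : StrongDual ℝ C(I, ℝ)) :
    ‖bernsteinCoeffs n φ‖ = ∑ k : Fin (n + 1), |φ (bernstein n k)| := by
  rw [lp.norm_eq_tsum_rpow (by simp)]
  simp only [ENNReal.toReal_one, Real.rpow_one, div_one, Real.norm_eq_abs]
  change ∑' k : ℕ, |φ (bernstein n k)| = _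
  rw [tsum_eq_sum (s := Finset.range (n + 1)) fun k hk => ?_, Finset.sum_range]
  rw [bernstein_eq_zero_of_lt (by simpa using hk), map_zero, abs_zero]

theorem norm_bernsteinCoeffs_le (n : ℕ) (φ : StrongDual ℝ C(I, ℝ)) :
    ‖bernsteinCoeffs n φ‖ ≤ ‖φ‖ := by
  rw [norm_bernsteinCoeffs]
  exact sum_abs_apply_le_opNorm _ (fun _ _ => bernstein_nonneg)
    (fun x => (bernstein.probability n x).le) φ

theorem abs_apply_bernsteinApproximation_le (n : ℕ) (φ : StrongDual ℝ C(I, ℝ)) {f : C(I, ℝ)}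
    (hf : ‖f‖ ≤ 1) : |φ (bernsteinApproximation n f)| ≤ ‖bernsteinCoeffs n φ‖ := by
  have hB : bernsteinApproximation n f =
      ∑ k : Fin (n + 1), f (bernstein.z k) • bernstein n k := by
    ext x
    simp [bernsteinApproximation.apply, mul_comm]
  rw [hB, map_sum, norm_bernsteinCoeffs]
  refine (Finset.abs_sum_le_sum_abs _ _).trans (Finset.sum_le_sum fun k _ => ?_)
  rw [map_smul, smul_eq_mul, abs_mul]
  refine mul_le_of_le_one_left (abs_nonneg _) ?_
  simpa using (f.norm_coe_le_norm (bernstein.z k)).trans hf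

theorem tendsto_norm_bernsteinCoeffs (φ : StrongDual ℝ C(I, ℝ)) :
    Tendsto (fun n => ‖bernsteinCoeffs n φ‖) atTop (𝓝 ‖φ‖) := by
  refine tendsto_order.2 ⟨fun a ha => ?_, fun a ha =>
    Eventually.of_forall fun n => (norm_bernsteinCoeffs_le n φ).trans_lt ha⟩
  obtain ⟨f, hf, hφf⟩ := φ.exists_lt_apply_of_lt_opNorm ha
  have hconv : Tendsto (fun n => |φ (bernsteinApproximation n f)|) atTop (𝓝 |φ f|) :=
    ((φ.continuous.tendsto f).comp (bernsteinApproximation_uniform f)).abs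
  filter_upwards [hconv.eventually (lt_mem_nhds hφf)] with n hn
  exact hn.trans_le (abs_apply_bernsteinApproximation_le n φ hf.le)

theorem one_le_dist_evalCLM {X : Type*} [TopologicalSpace X] [CompactSpace X] [T2Space X]
    {x y : X} (hxy : x ≠ y) :
    1 ≤ dist (ContinuousMap.evalCLM ℝ x : StrongDual ℝ C(X, ℝ)) (ContinuousMap.evalCLM ℝ y) := by
  rw [dist_eq_norm (E := StrongDual ℝ C(X, ℝ))]
  obtain ⟨f, hfy, hfx, hf01⟩ := exists_continuous_zero_one_of_isClosed isClosed_singleton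
    isClosed_singleton (Set.disjoint_singleton.mpr hxy.symm)
  have hf : ‖f‖ ≤ 1 := (ContinuousMap.norm_le _ zero_le_one).mpr fun z => by
    rw [Real.norm_of_nonneg (hf01 z).1]
    exact (hf01 z).2
  set d : StrongDual ℝ C(X, ℝ) := ContinuousMap.evalCLM ℝ x - ContinuousMap.evalCLM ℝ y
  calc (1 : ℝ) = ‖d f‖ := by simp [d, hfx rfl, hfy rfl]
    _ ≤ ‖d‖ * ‖f‖ := d.le_opNorm f
    _ ≤ ‖d‖ := mul_le_of_le_one_right (norm_nonneg d) hf

theorem countable_of_pairwise_le_dist {ι α : Type*} [PseudoMetricSpace α] [SeparableSpace α]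
    {r : ℝ} (hr : 0 < r) (f : ι → α) (hf : Pairwise fun i j => r ≤ dist (f i) (f j)) :
    Countable ι := by
  have : DiscreteTopology (Set.range f) := DiscreteTopology.of_forall_le_dist hr <| by
    rintro ⟨_, i, rfl⟩ ⟨_, j, rfl⟩ hne
    exact hf fun h => hne (h ▸ rfl)
  have : Countable (Set.range f) :=
    separableSpace_iff_countable.mp (IsSeparable.of_separableSpace _).separableSpace
  refine Function.Injective.countable (f := Set.rangeFactorization f)
    (Set.rangeFactorization_injective.mpr fun i j h => ?_)
  by_contra hne
  have : r ≤ dist (f i) (f j) := hf hne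
  rw [h, dist_self] at this
  exact hr.not_ge this

theorem not_separableSpace_strongDual_continuousMap {X : Type*} [TopologicalSpace X]
    [CompactSpace X] [T2Space X] [Uncountable X] :
    ¬ SeparableSpace (StrongDual ℝ C(X, ℝ)) := fun _ =>
  not_countable (α := X) <| countable_of_pairwise_le_dist one_pos
    (fun x => (ContinuousMap.evalCLM ℝ x : StrongDual ℝ C(X, ℝ))) fun _ _ => one_le_dist_evalCLM

instance : Uncountable I := by
  rw [← not_countable_iff, Set.countable_coe_iff, Cardinal.Real.Icc_countable_iff]
  norm_num

theorem statement14 {X : Type*} [NormedAddCommGroup X] [NormedSpace ℝ X]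
    (h : FinitelyRepresentable (lp (fun _ : ℕ => ℝ) 1) X) :
    FinitelyRepresentable (StrongDual ℝ C(Set.Icc (0:ℝ) 1, ℝ)) X ∧
    TopologicalSpace.SeparableSpace C(Set.Icc (0:ℝ) 1, ℝ) ∧
    ¬ TopologicalSpace.SeparableSpace (StrongDual ℝ C(Set.Icc (0:ℝ) 1, ℝ)) :=
  ⟨(finitelyRepresentable_of_tendsto_norm bernsteinCoeffs norm_bernsteinCoeffs_le
    tendsto_norm_bernsteinCoeffs).trans h, inferInstance,
    not_separableSpace_strongDual_continuousMap⟩
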